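/- arXiv:2311.13111 — 2 statements merged into one kernel-verified Lean document; each statement's English description precedes it below -/
import Mathlib

section
/- Let ω(x) = p(x) + q(x)·x be a Raviart–Thomas field of degree k on ℝ^d, let n ∈ ℝ^d and c ∈ ℝ. Then there exists a polynomial r : ℝ^d → ℝ of total degree at most k such that ω(x)·n = r(x) for every x ∈ ℝ^d satisfying ⟨x, n⟩ = c. In particular, on any hyperplane the normal component of a Raviart–Thomas field of degree k agrees with a polynomial of total degree at most k. -/
open MeasureTheory

noncomputable section

/-- Points of `ℝ^d` with the Euclidean structure. -/
abbrev Pt (d : ℕ) := EuclideanSpace ℝ (Fin d)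

/-- `f : ℝ^d → ℝ` is a polynomial of total degree at most `k`. -/
def IsPolyDeg (d k : ℕ) (f : Pt d → ℝ) : Prop :=
  ∃ p : MvPolynomial (Fin d) ℝ, p.totalDegree ≤ k ∧
    ∀ x : Pt d, f x = MvPolynomial.eval (fun i => x i) p

/-- A `P_k` vector field on `ℝ^d`: each component is a polynomial of total degree ≤ k. -/
def IsPolyVF (d k : ℕ) (v : Pt d → Pt d) : Prop :=
  ∀ i : Fin d, IsPolyDeg d k (fun x => v x i)

/-- A `P_m` vector field for an integer `m` (possibly `-1`): if `m < 0` only the zero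
field qualifies, otherwise the components are polynomials of total degree ≤ m. -/
def IsPolyVFInt (d : ℕ) (m : ℤ) (v : Pt d → Pt d) : Prop :=
  if m < 0 then ∀ x, v x = 0 else IsPolyVF d m.toNat v

/-- A Raviart–Thomas field of degree `k` on `ℝ^d`: `ω x = p x + q x • x` with `p` a `P_k`
vector field and `q` a scalar polynomial of total degree ≤ k. -/
def IsRT (d k : ℕ) (ω : Pt d → Pt d) : Prop :=
  ∃ p : Pt d → Pt d, ∃ q : Pt d → ℝ,
    IsPolyVF d k p ∧ IsPolyDeg d k q ∧ ∀ x, ω x = p x + q x • x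

/-- Partial derivative `∂f/∂x_l` at `x`. -/
def pd (d : ℕ) (f : Pt d → ℝ) (l : Fin d) (x : Pt d) : ℝ :=
  fderiv ℝ f x (EuclideanSpace.single l (1 : ℝ))

/-- Divergence `∇·ψ = Σ_i ∂ψ_i/∂x_i`. -/
def vdiv (d : ℕ) (ψ : Pt d → Pt d) (x : Pt d) : ℝ :=
  ∑ i : Fin d, pd d (fun y => ψ y i) i x

/-- The simplex `T` with vertices `v 0, …, v d`. -/
def simplexT (d : ℕ) (v : Fin (d + 1) → Pt d) : Set (Pt d) :=
  convexHull ℝ (Set.range v)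

/-- The facet `F_j` opposite to vertex `v j`. -/
def facet (d : ℕ) (v : Fin (d + 1) → Pt d) (j : Fin (d + 1)) : Set (Pt d) :=
  convexHull ℝ (v '' {i | i ≠ j})

/-- `n` is the unit outward normal to the simplex with vertices `v` on the facet `F_j`:
it is a unit vector, orthogonal to the direction of the affine span of `F_j`, and
`⟨n, v j⟩ < ⟨n, x⟩` for all `x ∈ F_j`. -/
def IsOutwardNormal (d : ℕ) (v : Fin (d + 1) → Pt d) (j : Fin (d + 1)) (n : Pt d) : Prop :=
  ‖n‖ = 1 ∧
  (∀ x ∈ facet d v j, ∀ y ∈ facet d v j, (inner ℝ n (x - y) : ℝ) = 0) ∧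
  (∀ x ∈ facet d v j, (inner ℝ n (v j) : ℝ) < (inner ℝ n x : ℝ))

end

lemma isPolyDeg_smul {d k : ℕ} {f : Pt d → ℝ} (a : ℝ) (hf : IsPolyDeg d k f) :
    IsPolyDeg d k (fun x => a * f x) := by
  obtain ⟨p, hp, hfp⟩ := hf
  exact ⟨a • p, le_trans (MvPolynomial.totalDegree_smul_le a p) hp,
    fun x => by simp [hfp x, MvPolynomial.smul_eval]⟩

lemma isPolyDeg_add {d k : ℕ} {f g : Pt d → ℝ} (hf : IsPolyDeg d k f) (hg : IsPolyDeg d k g) :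
    IsPolyDeg d k (fun x => f x + g x) := by
  obtain ⟨p, hp, hfp⟩ := hf
  obtain ⟨q, hq, hgq⟩ := hg
  exact ⟨p + q, le_trans (MvPolynomial.totalDegree_add p q) (max_le hp hq),
    fun x => by simp [hfp x, hgq x]⟩

lemma isPolyDeg_sum {d k : ℕ} {ι : Type*} [DecidableEq ι] (s : Finset ι) (f : ι → Pt d → ℝ)
    (hf : ∀ i ∈ s, IsPolyDeg d k (f i)) :
    IsPolyDeg d k (fun x => ∑ i ∈ s, f i x) := by
  induction s using Finset.induction_on with
  | empty => exact ⟨0, by simp, fun x => by simp⟩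
  | insert a s hns ih =>
    simp only [Finset.sum_insert hns]
    exact isPolyDeg_add (hf a (Finset.mem_insert_self a s))
      (ih fun i hi => hf i (Finset.mem_insert_of_mem hi))

/-- on any hyperplane `⟨x, n⟩ = c`, the normal component `ω·n` of a
Raviart–Thomas field of degree `k` agrees with a polynomial of total degree at most `k`. -/
theorem rt_normal_component_poly_on_hyperplane (d k : ℕ) (hd : 1 ≤ d)
    (ω : Pt d → Pt d) (hω : IsRT d k ω) (n : Pt d) (c : ℝ) :
    ∃ r : Pt d → ℝ, IsPolyDeg d k r ∧
      ∀ x : Pt d, (inner ℝ x n : ℝ) = c → (inner ℝ (ω x) n : ℝ) = r x := by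
  obtain ⟨p, q, hp, hq, hω⟩ := hω
  refine ⟨fun x => (∑ i : Fin d, n i * p x i) + c * q x, ?_, ?_⟩
  · exact isPolyDeg_add
      (isPolyDeg_sum Finset.univ _ fun i _ => isPolyDeg_smul (n i) (hp i))
      (isPolyDeg_smul c hq)
  · intro x hx
    have : (inner ℝ (ω x) n : ℝ) = (inner ℝ (p x) n : ℝ) + q x * (inner ℝ x n : ℝ) := by
      rw [hω x, inner_add_left, real_inner_smul_left]
    have h2 : (inner ℝ (p x) n : ℝ) = ∑ i : Fin d, n i * p x i := by
      rw [PiLp.inner_apply]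
      simp [RCLike.inner_apply, mul_comm]
    rw [this, hx, h2]
    ring
end

section
/- Let T be a nondegenerate d-simplex in ℝ^d, let F_j be a facet of T with unit outward normal n_j, let ω be a Raviart–Thomas field of degree k on ℝ^d, and let r : ℝ^d → ℝ be a polynomial of total degree at most k. If ∫_{F_j} (ω(x)·n_j − r(x)) φ(x) dH^{d−1}(x) = 0 for every polynomial φ : ℝ^d → ℝ of total degree at most k, then ω(x)·n_j = r(x) for every x ∈ F_j. (In particular, the reconstruction operator satisfies R(v)·n = v_b·n pointwise on each facet.) -/
set_option maxHeartbeats 1000000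

open MeasureTheory Module


open MeasureTheory

lemma facet_measure_aux (d : ℕ) (hd : 1 ≤ d)
    (v : Fin (d + 1) → Pt d) (hv : AffineIndependent ℝ v) (j : Fin (d + 1)) :
    μH[(d : ℝ) - 1] (facet d v j) ≠ ⊤ ∧
    ∀ U : Set (Pt d), IsOpen U → (facet d v j ∩ U).Nonempty →
      μH[(d : ℝ) - 1] (facet d v j ∩ U) ≠ 0 := by
  classical
  have hnt : Nontrivial (Fin (d + 1)) := Fin.nontrivial_iff_two_le.mpr (by omega)
  obtain ⟨i₀, hi₀⟩ := exists_ne j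
  set y₀ : Pt d := v i₀ with hy₀def
  set S : Set (Fin (d + 1)) := {i | i ≠ j} with hS
  set W : Submodule ℝ (Pt d) := vectorSpan ℝ (v '' S) with hW
  have hsub : AffineIndependent ℝ (fun i : {i // i ≠ j} => v i) :=
    hv.comp_embedding (Function.Embedding.subtype _)
  have hrange : Set.range (fun i : {i // i ≠ j} => v (i : Fin (d + 1))) = v '' S := by
    ext x
    constructor
    · rintro ⟨i, rfl⟩; exact ⟨i, i.2, rfl⟩
    · rintro ⟨i, hi, rfl⟩; exact ⟨⟨i, hi⟩, rfl⟩
  have hcard : Fintype.card {i : Fin (d + 1) // i ≠ j} = d := by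
    simp [Fintype.card_subtype_compl]
  have hfr : finrank ℝ W = d - 1 := by
    have h1 := hsub.finrank_vectorSpan (n := d - 1) (by omega)
    rwa [hrange] at h1
  set E := EuclideanSpace ℝ (Fin (finrank ℝ W)) with hE
  set iso : W ≃ₗᵢ[ℝ] E := (stdOrthonormalBasis ℝ W).repr with hiso
  set f : E → Pt d := fun u => y₀ + (iso.symm u : Pt d) with hf
  have hfiso : Isometry f := by
    intro a b
    simp only [hf, edist_add_left]
    exact iso.symm.isometry a b
  set L : E →ₗ[ℝ] Pt d := W.subtype ∘ₗ iso.symm.toLinearEquiv.toLinearMap with hL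
  set F : E →ᵃ[ℝ] Pt d := AffineMap.mk' f L 0 (by
    intro u
    show y₀ + ↑(iso.symm u) = L (u -ᵥ 0) +ᵥ (y₀ + ↑(iso.symm 0))
    simp only [hL, vsub_eq_sub, vadd_eq_add, sub_zero, map_zero, LinearMap.comp_apply,
      LinearIsometryEquiv.coe_toLinearEquiv, LinearEquiv.coe_coe, Submodule.coe_subtype,
      Submodule.coe_zero, add_zero]
    exact add_comm _ _) with hF
  have hFcoe : ⇑F = f := rfl
  have hmem : ∀ i : {i // i ≠ j}, v i - y₀ ∈ W := by
    intro i
    exact vsub_mem_vectorSpan ℝ (p₁ := v i) (p₂ := y₀) (s := v '' S)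
      ⟨i, i.2, rfl⟩ ⟨i₀, hi₀, rfl⟩
  set u : {i // i ≠ j} → E := fun i => iso ⟨v i - y₀, hmem i⟩ with hu
  have hFu : ∀ i, F (u i) = v i := by
    intro i
    show f (u i) = v i
    simp [hf, hu]
  set K : Set E := convexHull ℝ (Set.range u) with hK
  have hKcomp : IsCompact K := (Set.finite_range u).isCompact_convexHull ℝ
  have hFK : F '' K = facet d v j := by
    rw [hK, AffineMap.image_convexHull, ← Set.range_comp]
    have : F ∘ u = fun i : {i // i ≠ j} => v i := funext hFu
    rw [this, hrange]
    rfl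
  have huind : AffineIndependent ℝ u := by
    refine AffineIndependent.of_comp F ?_
    have : F ∘ u = fun i : {i // i ≠ j} => v i := funext hFu
    rw [this]; exact hsub
  have hEfr : finrank ℝ E = d - 1 := by
    show finrank ℝ (EuclideanSpace ℝ (Fin (finrank ℝ ↥W))) = d - 1
    rw [finrank_euclideanSpace_fin]
    exact hfr
  have htop : affineSpan ℝ (Set.range u) = ⊤ :=
    huind.affineSpan_eq_top_iff_card_eq_finrank_add_one.mpr (by rw [hcard, hEfr]; omega)
  have hKint : (interior K).Nonempty :=
    interior_convexHull_nonempty_iff_affineSpan_eq_top.mpr htop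
  have hd0 : (0 : ℝ) ≤ (d : ℝ) - 1 := by
    have : (1 : ℝ) ≤ d := by exact_mod_cast hd
    linarith
  have himg : ∀ s : Set E, μH[(d : ℝ) - 1] (F '' s) = μH[(d : ℝ) - 1] s := fun s =>
    hfiso.hausdorffMeasure_image (Or.inl hd0) s
  have hcast : (μH[(d : ℝ) - 1] : Measure E) = (μH[(finrank ℝ E : ℝ)] : Measure E) := by
    congr 1
    rw [hEfr, Nat.cast_sub hd, Nat.cast_one]
  constructor
  · rw [← hFK, himg, hcast]
    exact hKcomp.measure_lt_top.ne
  · intro U hU ⟨x₀, hx₀f, hx₀U⟩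
    obtain ⟨u₀, hu₀K, hu₀⟩ : ∃ u₀ ∈ K, F u₀ = x₀ := by
      rw [← hFK] at hx₀f; exact hx₀f
    have hUF : IsOpen (F ⁻¹' U) := hU.preimage (hFcoe ▸ hfiso.continuous)
    have hu₀U : u₀ ∈ F ⁻¹' U := by simp [Set.mem_preimage, hu₀, hx₀U]
    obtain ⟨z, hz⟩ := hKint
    set γ : ℝ → E := fun t => t • z + (1 - t) • u₀ with hγ
    have hγc : Continuous γ :=
      (continuous_id.smul continuous_const).add ((continuous_const.sub continuous_id).smul
        continuous_const)
    have hγ0 : γ 0 = u₀ := by simp [hγ]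
    have hev : ∀ᶠ t in nhds (0 : ℝ), γ t ∈ F ⁻¹' U := by
      refine hγc.continuousAt.eventually_mem ?_
      rw [hγ0]
      exact hUF.mem_nhds hu₀U
    have hev2 : ∀ᶠ t in nhds (0 : ℝ), t < 1 := Filter.Tendsto.eventually_lt_const (by norm_num)
      Filter.tendsto_id
    have h3 : ∀ᶠ t in nhdsWithin (0:ℝ) (Set.Ioi 0), (γ t ∈ F ⁻¹' U ∧ t < 1) ∧ t ∈ Set.Ioi (0:ℝ) :=
      ((hev.and hev2).filter_mono nhdsWithin_le_nhds).and self_mem_nhdsWithin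
    obtain ⟨t, ⟨htU, ht1⟩, ht0⟩ := h3.exists
    have hwint : γ t ∈ interior K := by
      refine (convex_convexHull ℝ _).combo_interior_closure_mem_interior hz
        (subset_closure hu₀K) ht0 (by linarith) (by ring)
    have hne : (interior K ∩ F ⁻¹' U).Nonempty := ⟨γ t, hwint, htU⟩
    have hposE : (0 : ENNReal) < μH[(d : ℝ) - 1] (interior K ∩ F ⁻¹' U) := by
      rw [hcast]
      exact (isOpen_interior.inter hUF).measure_pos _ hne
    have : facet d v j ∩ U = F '' (K ∩ F ⁻¹' U) := by
      rw [Set.image_inter_preimage, hFK]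
    rw [this, himg]
    exact (lt_of_lt_of_le hposE (measure_mono (Set.inter_subset_inter_left _ interior_subset))).ne'

/-- if the facet moments of `ω·n − r` against all polynomials of degree ≤ k
vanish, then `ω·n = r` pointwise on the facet. -/
theorem rt_normal_trace_pointwise (d k : ℕ) (hd : 1 ≤ d)
    (v : Fin (d + 1) → Pt d) (hv : AffineIndependent ℝ v) (j : Fin (d + 1))
    (n : Pt d) (hn : IsOutwardNormal d v j n)
    (ω : Pt d → Pt d) (hω : IsRT d k ω)
    (r : Pt d → ℝ) (hr : IsPolyDeg d k r)
    (h : ∀ φ : Pt d → ℝ, IsPolyDeg d k φ →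
      ∫ x in facet d v j, ((inner ℝ (ω x) n : ℝ) - r x) * φ x ∂μH[(d : ℝ) - 1] = 0) :
    ∀ x ∈ facet d v j, (inner ℝ (ω x) n : ℝ) = r x := by
  classical
  obtain ⟨-, hortho, -⟩ := hn
  obtain ⟨p, q, hp, hq, hpq⟩ := hω
  have hnt : Nontrivial (Fin (d + 1)) := Fin.nontrivial_iff_two_le.mpr (by omega)
  obtain ⟨i₀, hi₀⟩ := exists_ne j
  have hy₀ : v i₀ ∈ facet d v j := subset_convexHull ℝ _ ⟨i₀, hi₀, rfl⟩
  set c : ℝ := inner ℝ (v i₀) n with hc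
  have hxc : ∀ x ∈ facet d v j, (inner ℝ x n : ℝ) = c := by
    intro x hx
    have h1 := hortho x hx (v i₀) hy₀
    rw [inner_sub_right] at h1
    have h2 : (inner ℝ n x : ℝ) = inner ℝ n (v i₀) := by linarith
    linarith [real_inner_comm x n, real_inner_comm (v i₀) n, h2, hc]
  obtain ⟨Q, hQd, hQe⟩ := hq
  obtain ⟨R, hRd, hRe⟩ := hr
  choose P hPd hPe using hp
  set Φ : MvPolynomial (Fin d) ℝ :=
    (∑ i : Fin d, MvPolynomial.C (n i) * P i) + (MvPolynomial.C c * Q + (-R)) with hΦ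
  set φ : Pt d → ℝ := fun x => MvPolynomial.eval (fun i => x i) Φ with hφ
  have hφpoly : IsPolyDeg d k φ := by
    refine ⟨Φ, ?_, fun _ => rfl⟩
    rw [hΦ]
    refine le_trans (MvPolynomial.totalDegree_add _ _) (max_le ?_ ?_)
    · refine le_trans (MvPolynomial.totalDegree_finset_sum _ _) (Finset.sup_le fun i _ => ?_)
      refine le_trans (MvPolynomial.totalDegree_mul _ _) ?_
      simp only [MvPolynomial.totalDegree_C, zero_add]
      exact hPd i
    · refine le_trans (MvPolynomial.totalDegree_add _ _) (max_le ?_ ?_)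
      · refine le_trans (MvPolynomial.totalDegree_mul _ _) ?_
        simp only [MvPolynomial.totalDegree_C, zero_add]
        exact hQd
      · rw [MvPolynomial.totalDegree_neg]
        exact hRd
  have hφeq : ∀ x ∈ facet d v j, (inner ℝ (ω x) n : ℝ) - r x = φ x := by
    intro x hx
    rw [hpq x, inner_add_left, real_inner_smul_left, hxc x hx]
    rw [hφ]
    simp only [hΦ, map_add, map_sum, map_mul, map_neg, MvPolynomial.eval_C]
    rw [PiLp.inner_apply]
    simp only [RCLike.inner_apply', conj_trivial]
    rw [← hQe, ← hRe]
    have : ∀ i : Fin d, MvPolynomial.eval (fun i => x i) (P i) = p x i := fun i => (hPe i x).symm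
    simp only [this]
    have hsum : ∑ i : Fin d, p x i * n i = ∑ i : Fin d, n i * p x i :=
      Finset.sum_congr rfl fun i _ => mul_comm _ _
    rw [hsum]
    ring
  set μ : Measure (Pt d) := μH[(d : ℝ) - 1] with hμ
  have hfacetcomp : IsCompact (facet d v j) :=
    (Set.Finite.image v (Set.toFinite _)).isCompact_convexHull ℝ
  have hfacetmeas : MeasurableSet (facet d v j) := hfacetcomp.isClosed.measurableSet
  have hφcont : Continuous φ := by
    rw [hφ]
    exact (MvPolynomial.continuous_eval (p := Φ)).comp
      (continuous_pi fun i => (EuclideanSpace.proj (𝕜 := ℝ) i).continuous)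
  have hgcont : Continuous fun x => φ x * φ x := hφcont.mul hφcont
  obtain ⟨hfin, hpos⟩ := facet_measure_aux d hd v hv j
  obtain ⟨C, hC⟩ := hfacetcomp.exists_bound_of_continuousOn hgcont.continuousOn
  have hInt : IntegrableOn (fun x => φ x * φ x) (facet d v j) μ := by
    refine Measure.integrableOn_of_bounded (M := C) hfin hgcont.aestronglyMeasurable ?_
    exact Filter.Eventually.mono (self_mem_ae_restrict hfacetmeas) fun x hx => hC x hx
  have hcongr : ∫ x in facet d v j, ((inner ℝ (ω x) n : ℝ) - r x) * φ x ∂μ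
      = ∫ x in facet d v j, φ x * φ x ∂μ :=
    setIntegral_congr_fun hfacetmeas (fun x hx => by rw [hφeq x hx])
  have hzero : (fun x => φ x * φ x) =ᵐ[μ.restrict (facet d v j)] 0 := by
    refine (integral_eq_zero_iff_of_nonneg (fun x => mul_self_nonneg (φ x)) hInt).mp ?_
    rw [← hcongr]
    exact h φ hφpoly
  have hnull : μ (facet d v j ∩ {x | φ x ≠ 0}) = 0 := by
    have h1 := hzero
    rw [Filter.EventuallyEq, ae_iff] at h1
    rw [Measure.restrict_apply' hfacetmeas] at h1
    have h2 : {a : Pt d | ¬(fun x => φ x * φ x) a = (0 : (Pt d) → ℝ) a} = {x | φ x ≠ 0} := by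
      ext x
      simp [mul_self_eq_zero]
    rw [h2, Set.inter_comm] at h1
    exact h1
  intro x hx
  by_contra hne
  have hxφ : φ x ≠ 0 := by
    rw [← hφeq x hx]
    exact fun h0 => hne (sub_eq_zero.mp h0)
  have hUopen : IsOpen {y : Pt d | φ y ≠ 0} :=
    isOpen_compl_singleton.preimage hφcont
  exact hpos _ hUopen ⟨x, hx, hxφ⟩ hnull
end
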